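/- Newton's iteration μ_{k+1} = μ_k - g(μ_k)/g'(μ_k) with μ₀ = 0 applied to g(μ) = ‖(A-μI)⁻¹b‖₁ - μ produces a well-defined monotonically increasing sequence satisfying 0 ≤ μ_k ≤ μ_{k+1} ≤ μ* for all k, converging to μ* = ‖x*‖₁, where x* is the unique solution of Ax - ‖x‖₁x = b with ‖x*‖₁ < 1 - σ. -/

import Mathlib

/-!
Write `R μ = (A - μ)⁻¹ = ((2 - σ - μ) - M)⁻¹`. For `μ ≤ 1 - σ` the column sums of `M` stay below
`2 - σ - μ` by at least `1 - σ`, so `R μ` exists, preserves nonnegativity and enlarges the ℓ¹ norm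
of nonnegative vectors by a factor at most `1 / (1 - σ)`. Since `(A - μ*) x* = b`, we have
`x* - R μ b = (μ* - μ) R μ x*`, hence `g μ = (μ* - μ) (1 - S μ)` with
`S μ = ‖R μ x*‖₁ ≤ μ* / (1 - σ) < 1`, while `g' μ = D μ - 1` with `0 ≤ D μ = ‖R μ (R μ b)‖₁ ≤ S μ`
because `R μ b ≤ x*`. So on `[0, μ*]` a Newton step never overshoots `μ*` and shrinks `μ* - μ`
by the factor `μ* / (1 - σ)`.
-/

open Matrix Set Filter Topology

/-- ℓ¹ norm of a vector in ℝⁿ. -/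
noncomputable def l1 {n : ℕ} (x : Fin n → ℝ) : ℝ := ∑ i, |x i|

/-- Induced operator 1-norm of a real matrix (maximum column sum). -/
noncomputable def op1 {n : ℕ} (A : Matrix (Fin n) (Fin n) ℝ) : ℝ := ⨆ j, ∑ i, |A i j|

section NonnegMatrix

variable {ι : Type*} [Fintype ι] {M : Matrix ι ι ℝ} {σ : ℝ}

lemma sum_mulVec_le_of_colSum_le (hcol : ∀ j, ∑ i, M i j ≤ σ) {w : ι → ℝ} (hw : 0 ≤ w) :
    ∑ i, (M *ᵥ w) i ≤ σ * ∑ i, w i :=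
  calc ∑ i, (M *ᵥ w) i = ∑ j, (∑ i, M i j) * w j := by
        simp only [mulVec, dotProduct, Finset.sum_mul]
        exact Finset.sum_comm
    _ ≤ ∑ j, σ * w j := Finset.sum_le_sum fun j _ => mul_le_mul_of_nonneg_right (hcol j) (hw j)
    _ = σ * ∑ i, w i := (Finset.mul_sum ..).symm

lemma mulVec_nonneg (hM : ∀ i j, 0 ≤ M i j) {v : ι → ℝ} (hv : 0 ≤ v) : 0 ≤ M *ᵥ v :=
  fun i => Finset.sum_nonneg fun j _ => mul_nonneg (hM i j) (hv j)

variable [DecidableEq ι] {c : ℝ}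

lemma smul_one_sub_mulVec (u : ι → ℝ) : (c • (1 : Matrix ι ι ℝ) - M) *ᵥ u = c • u - M *ᵥ u := by
  rw [sub_mulVec, smul_mulVec, one_mulVec]

/-- The negative part `w` of `u` satisfies `c • w ≤ M *ᵥ w`, which the column-sum bound
forbids unless `w = 0`. -/
lemma nonneg_of_smul_one_sub_mulVec_nonneg (hM : ∀ i j, 0 ≤ M i j)
    (hcol : ∀ j, ∑ i, M i j ≤ σ) (hc : σ < c) {u : ι → ℝ}
    (hu : 0 ≤ (c • (1 : Matrix ι ι ℝ) - M) *ᵥ u) : 0 ≤ u := by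
  set w : ι → ℝ := fun i => max (-u i) 0 with hw_def
  have hw : 0 ≤ w := fun i => le_max_right _ _
  have huw : 0 ≤ u + w := fun i => by
    simp only [Pi.add_apply, Pi.zero_apply, hw_def]
    linarith [le_max_left (-u i) 0]
  have hcw : ∀ i, c * w i ≤ (M *ᵥ w) i := by
    intro i
    rcases le_total 0 (u i) with hui | hui
    · simpa only [hw_def, max_eq_right (neg_nonpos.2 hui), mul_zero, Pi.zero_apply]
        using mulVec_nonneg hM hw i
    · have h₁ : 0 ≤ c * u i - (M *ᵥ u) i := by simpa [smul_one_sub_mulVec] using hu i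
      have h₂ : 0 ≤ (M *ᵥ u) i + (M *ᵥ w) i := by simpa [mulVec_add] using mulVec_nonneg hM huw i
      simp only [hw_def, max_eq_left (neg_nonneg.2 hui)]
      linarith
  have hsum : c * ∑ i, w i ≤ σ * ∑ i, w i :=
    (Finset.mul_sum ..).trans_le <| (Finset.sum_le_sum fun i _ => hcw i).trans
      (sum_mulVec_le_of_colSum_le hcol hw)
  have hsum0 : ∑ i, w i ≤ 0 := by nlinarith [Finset.sum_nonneg fun i (_ : i ∈ Finset.univ) => hw i]
  intro i
  have hwi := (Finset.single_le_sum (fun j _ => hw j) (Finset.mem_univ i)).trans hsum0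
  simp only [hw_def, max_le_iff, neg_nonpos] at hwi
  exact hwi.1

lemma isUnit_det_smul_one_sub (hM : ∀ i j, 0 ≤ M i j) (hcol : ∀ j, ∑ i, M i j ≤ σ)
    (hc : σ < c) : IsUnit (c • (1 : Matrix ι ι ℝ) - M).det := by
  rw [← isUnit_iff_isUnit_det, ← mulVec_injective_iff_isUnit]
  intro u v huv
  have h₁ : (c • (1 : Matrix ι ι ℝ) - M) *ᵥ (u - v) = 0 := by rw [mulVec_sub, huv, sub_self]
  have h₂ : (c • (1 : Matrix ι ι ℝ) - M) *ᵥ (v - u) = 0 := by rw [mulVec_sub, huv, sub_self]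
  exact le_antisymm (sub_nonneg.1 (nonneg_of_smul_one_sub_mulVec_nonneg hM hcol hc h₂.ge))
    (sub_nonneg.1 (nonneg_of_smul_one_sub_mulVec_nonneg hM hcol hc h₁.ge))

lemma smul_one_sub_inv_mulVec_nonneg (hM : ∀ i j, 0 ≤ M i j) (hcol : ∀ j, ∑ i, M i j ≤ σ)
    (hc : σ < c) {v : ι → ℝ} (hv : 0 ≤ v) : 0 ≤ (c • (1 : Matrix ι ι ℝ) - M)⁻¹ *ᵥ v := by
  refine nonneg_of_smul_one_sub_mulVec_nonneg hM hcol hc ?_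
  rwa [mulVec_mulVec, mul_nonsing_inv _ (isUnit_det_smul_one_sub hM hcol hc), one_mulVec]

lemma sum_smul_one_sub_inv_mulVec_le (hM : ∀ i j, 0 ≤ M i j) (hcol : ∀ j, ∑ i, M i j ≤ σ)
    (hc : σ < c) {v : ι → ℝ} (hv : 0 ≤ v) :
    (c - σ) * ∑ i, ((c • (1 : Matrix ι ι ℝ) - M)⁻¹ *ᵥ v) i ≤ ∑ i, v i := by
  set u := (c • (1 : Matrix ι ι ℝ) - M)⁻¹ *ᵥ v
  have hvu : v = c • u - M *ᵥ u := by
    rw [← smul_one_sub_mulVec, mulVec_mulVec,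
      mul_nonsing_inv _ (isUnit_det_smul_one_sub hM hcol hc), one_mulVec]
  have hMu := sum_mulVec_le_of_colSum_le hcol (smul_one_sub_inv_mulVec_nonneg hM hcol hc hv)
  conv_rhs => rw [hvu]
  simp only [Pi.sub_apply, Pi.smul_apply, smul_eq_mul, Finset.sum_sub_distrib, ← Finset.mul_sum]
  linarith

end NonnegMatrix

lemma sub_inv_mulVec_eq_smul {ι R : Type*} [Fintype ι] [DecidableEq ι] [CommRing R]
    {B : Matrix ι ι R} (hB : IsUnit B.det) {t : R} {x b : ι → R} (hx : (B - t • 1) *ᵥ x = b) :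
    x - B⁻¹ *ᵥ b = t • (B⁻¹ *ᵥ x) := by
  rw [← hx, sub_mulVec, mulVec_sub, mulVec_mulVec, nonsing_inv_mul _ hB, one_mulVec, smul_mulVec,
    one_mulVec, mulVec_smul, sub_sub_cancel]

section L1Bounds

variable {n : ℕ}

lemma l1_nonneg (x : Fin n → ℝ) : 0 ≤ l1 x :=
  Finset.sum_nonneg fun i _ => abs_nonneg (x i)

lemma l1_eq_sum_of_nonneg {x : Fin n → ℝ} (hx : 0 ≤ x) : l1 x = ∑ i, x i :=
  Finset.sum_congr rfl fun i _ => abs_of_nonneg (hx i)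

lemma l1_le_l1_of_le {x y : Fin n → ℝ} (hx : 0 ≤ x) (hxy : x ≤ y) : l1 x ≤ l1 y := by
  rw [l1_eq_sum_of_nonneg hx, l1_eq_sum_of_nonneg (hx.trans hxy)]
  exact Finset.sum_le_sum fun i _ => hxy i

variable {M : Matrix (Fin n) (Fin n) ℝ} {σ c t : ℝ} {v x b : Fin n → ℝ}

lemma colSum_le_op1 (hM : ∀ i j, 0 ≤ M i j) (j : Fin n) : ∑ i, M i j ≤ op1 M :=
  calc ∑ i, M i j = ∑ i, |M i j| := Finset.sum_congr rfl fun i _ => (abs_of_nonneg (hM i j)).symm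
    _ ≤ op1 M := le_ciSup (f := fun j => ∑ i, |M i j|) (Set.finite_range _).bddAbove j

lemma l1_smul_one_sub_inv_mulVec_le (hM : ∀ i j, 0 ≤ M i j)
    (hcol : ∀ j, ∑ i, M i j ≤ σ) (hc : σ < c) (hv : 0 ≤ v) :
    l1 ((c • (1 : Matrix (Fin n) (Fin n) ℝ) - M)⁻¹ *ᵥ v) ≤ l1 v / (c - σ) := by
  rw [le_div_iff₀' (sub_pos.2 hc), l1_eq_sum_of_nonneg hv,
    l1_eq_sum_of_nonneg (smul_one_sub_inv_mulVec_nonneg hM hcol hc hv)]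
  exact sum_smul_one_sub_inv_mulVec_le hM hcol hc hv

lemma l1_smul_one_sub_inv_mulVec_eq (hM : ∀ i j, 0 ≤ M i j) (hcol : ∀ j, ∑ i, M i j ≤ σ)
    (hc : σ < c) (hb : 0 ≤ b) (hx0 : 0 ≤ x)
    (hx : (c • (1 : Matrix (Fin n) (Fin n) ℝ) - M - t • 1) *ᵥ x = b) :
    l1 ((c • (1 : Matrix (Fin n) (Fin n) ℝ) - M)⁻¹ *ᵥ b) =
      l1 x - t * l1 ((c • (1 : Matrix (Fin n) (Fin n) ℝ) - M)⁻¹ *ᵥ x) := by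
  have h := congrArg (fun y : Fin n → ℝ => ∑ i, y i)
    (sub_inv_mulVec_eq_smul (isUnit_det_smul_one_sub hM hcol hc) hx)
  simp only [Pi.sub_apply, Pi.smul_apply, smul_eq_mul, Finset.sum_sub_distrib,
    ← Finset.mul_sum] at h
  rw [l1_eq_sum_of_nonneg hx0, l1_eq_sum_of_nonneg (smul_one_sub_inv_mulVec_nonneg hM hcol hc hb),
    l1_eq_sum_of_nonneg (smul_one_sub_inv_mulVec_nonneg hM hcol hc hx0)]
  linarith

lemma l1_inv_mul_inv_mulVec_le (hM : ∀ i j, 0 ≤ M i j) (hcol : ∀ j, ∑ i, M i j ≤ σ)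
    (hc : σ < c) (hb : 0 ≤ b) (hx0 : 0 ≤ x) (ht : 0 ≤ t)
    (hx : (c • (1 : Matrix (Fin n) (Fin n) ℝ) - M - t • 1) *ᵥ x = b) :
    l1 (((c • (1 : Matrix (Fin n) (Fin n) ℝ) - M)⁻¹ * (c • 1 - M)⁻¹) *ᵥ b) ≤
      l1 ((c • (1 : Matrix (Fin n) (Fin n) ℝ) - M)⁻¹ *ᵥ x) := by
  have hbx : (c • (1 : Matrix (Fin n) (Fin n) ℝ) - M)⁻¹ *ᵥ b ≤ x := by
    rw [← sub_nonneg, sub_inv_mulVec_eq_smul (isUnit_det_smul_one_sub hM hcol hc) hx]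
    exact smul_nonneg ht (smul_one_sub_inv_mulVec_nonneg hM hcol hc hx0)
  rw [← mulVec_mulVec]
  refine l1_le_l1_of_le (smul_one_sub_inv_mulVec_nonneg hM hcol hc
    (smul_one_sub_inv_mulVec_nonneg hM hcol hc hb)) ?_
  rw [← sub_nonneg, ← mulVec_sub]
  exact smul_one_sub_inv_mulVec_nonneg hM hcol hc (sub_nonneg.2 hbx)

end L1Bounds

lemma newton_step_bounds {μ μs D S r : ℝ} (hμ : μ ≤ μs) (hD : 0 ≤ D) (hDS : D ≤ S)
    (hS : S ≤ r) (hr : r < 1) :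
    μ ≤ μ - (μs - μ) * (1 - S) / (D - 1) ∧ μ - (μs - μ) * (1 - S) / (D - 1) ≤ μs ∧
      μs - (μ - (μs - μ) * (1 - S) / (D - 1)) ≤ r * (μs - μ) := by
  have hD1 : 0 < 1 - D := by linarith
  have hg : 0 ≤ (μs - μ) * (1 - S) := mul_nonneg (by linarith) (by linarith)
  have hstep : μ - (μs - μ) * (1 - S) / (D - 1) = μ + (μs - μ) * (1 - S) / (1 - D) := by
    rw [← neg_sub 1 D, div_neg, sub_neg_eq_add]
  have hupper : (μs - μ) * (1 - S) / (1 - D) ≤ μs - μ := by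
    rw [div_le_iff₀ hD1]
    exact mul_le_mul_of_nonneg_left (by linarith) (by linarith)
  have hlower : (μs - μ) * (1 - S) ≤ (μs - μ) * (1 - S) / (1 - D) := by
    rw [le_div_iff₀ hD1]
    nlinarith
  rw [hstep]
  refine ⟨by linarith [div_nonneg hg hD1.le], by linarith, ?_⟩
  nlinarith

theorem newton_iterate_monotone_tendsto {F D S : ℝ → ℝ} {μs r : ℝ} (hr0 : 0 ≤ r) (hr : r < 1)
    (hF : ∀ μ ∈ Icc 0 μs, F μ - μ = (μs - μ) * (1 - S μ))
    (hD : ∀ μ ∈ Icc 0 μs, 0 ≤ D μ) (hDS : ∀ μ ∈ Icc 0 μs, D μ ≤ S μ)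
    (hS : ∀ μ ∈ Icc 0 μs, S μ ≤ r) {s : ℕ → ℝ} (hs0 : s 0 ∈ Icc 0 μs)
    (hs : ∀ k, s (k + 1) = s k - (F (s k) - s k) / (D (s k) - 1)) :
    (∀ k, s k ∈ Icc 0 μs) ∧ Monotone s ∧ Tendsto s atTop (𝓝 μs) := by
  have hstep : ∀ k, s k ∈ Icc 0 μs →
      s k ≤ s (k + 1) ∧ s (k + 1) ≤ μs ∧ μs - s (k + 1) ≤ r * (μs - s k) := fun k hk => by
    rw [hs k, hF _ hk]
    exact newton_step_bounds hk.2 (hD _ hk) (hDS _ hk) (hS _ hk) hr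
  have hmem : ∀ k, s k ∈ Icc 0 μs := by
    intro k
    induction k with
    | zero => exact hs0
    | succ k ih => exact ⟨ih.1.trans (hstep k ih).1, (hstep k ih).2.1⟩
  have hgeom : ∀ k, μs - s k ≤ r ^ k * (μs - s 0) := by
    intro k
    induction k with
    | zero => simp
    | succ k ih =>
      calc μs - s (k + 1) ≤ r * (μs - s k) := (hstep k (hmem k)).2.2
        _ ≤ r * (r ^ k * (μs - s 0)) := by gcongr
        _ = r ^ (k + 1) * (μs - s 0) := by ring
  refine ⟨hmem, monotone_nat_of_le_succ fun k => (hstep k (hmem k)).1, ?_⟩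
  have hlim : Tendsto (fun k => μs - r ^ k * (μs - s 0)) atTop (𝓝 μs) := by
    simpa using tendsto_const_nhds.sub
      ((tendsto_pow_atTop_nhds_zero_of_lt_one hr0 hr).mul_const (μs - s 0))
  exact tendsto_of_tendsto_of_tendsto_of_le_of_le hlim tendsto_const_nhds
    (fun k => by linarith [hgeom k]) fun k => (hmem k).2

theorem stmt_12_general {n : ℕ} (M : Matrix (Fin n) (Fin n) ℝ) (hM : ∀ i j, 0 ≤ M i j)
    (σ : ℝ) (hσ : σ = op1 M) (hσ1 : σ < 1)
    (A : Matrix (Fin n) (Fin n) ℝ) (hA : A = (2 - σ) • (1 : Matrix (Fin n) (Fin n) ℝ) - M)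
    (b : Fin n → ℝ) (hb : ∀ i, 0 ≤ b i)
    (xs : Fin n → ℝ) (hxs : A.mulVec xs - l1 xs • xs = b) (hxs1 : l1 xs < 1 - σ)
    (μs : ℝ) (hμs : μs = l1 xs)
    (s : ℕ → ℝ) (hs0 : s 0 = 0)
    (hsrec : ∀ k, s (k + 1) = s k -
      (l1 ((A - s k • 1)⁻¹.mulVec b) - s k) /
        (l1 (((A - s k • 1)⁻¹ * (A - s k • 1)⁻¹).mulVec b) - 1)) :
    (∀ k, 0 ≤ s k ∧ s k ≤ s (k + 1) ∧ s (k + 1) ≤ μs) ∧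
      Tendsto s atTop (𝓝 μs) := by
  have hcol : ∀ j, ∑ i, M i j ≤ σ := hσ ▸ colSum_le_op1 hM
  have hA_sub : ∀ μ : ℝ, A - μ • 1 = (2 - σ - μ) • 1 - M := fun μ => by rw [hA]; module
  have hμs0 : 0 ≤ μs := hμs ▸ l1_nonneg xs
  have hc : ∀ μ ∈ Icc 0 μs, σ < 2 - σ - μ := fun μ hμ => by linarith [hμ.2]
  have hxs_sub : ∀ μ : ℝ, ((2 - σ - μ) • 1 - M - (μs - μ) • 1) *ᵥ xs = b := fun μ => by
    rw [← hA_sub, ← hxs, hμs, sub_sub, ← add_smul, add_sub_cancel, sub_mulVec, smul_mulVec,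
      one_mulVec]
  have hxs0 : 0 ≤ xs := nonneg_of_smul_one_sub_mulVec_nonneg hM hcol (hc μs ⟨hμs0, le_rfl⟩)
    (by simpa only [sub_self, zero_smul, sub_zero] using
      (hxs_sub μs).ge.trans' (show 0 ≤ b from hb))
  obtain ⟨hmem, hmono, hlim⟩ := newton_iterate_monotone_tendsto
    (F := fun μ => l1 ((A - μ • 1)⁻¹ *ᵥ b))
    (D := fun μ => l1 (((A - μ • 1)⁻¹ * (A - μ • 1)⁻¹) *ᵥ b))
    (S := fun μ => l1 ((A - μ • 1)⁻¹ *ᵥ xs)) (r := μs / (1 - σ))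
    (div_nonneg hμs0 (by linarith)) (by rwa [div_lt_one (by linarith), hμs])
    (fun μ hμ => by
      simp only [hA_sub, l1_smul_one_sub_inv_mulVec_eq hM hcol (hc μ hμ) hb hxs0 (hxs_sub μ), ← hμs]
      ring)
    (fun μ _ => l1_nonneg _)
    (fun μ hμ => by
      simp only [hA_sub]
      exact l1_inv_mul_inv_mulVec_le hM hcol (hc μ hμ) hb hxs0 (sub_nonneg.2 hμ.2) (hxs_sub μ))
    (fun μ hμ => by
      simp only [hA_sub, hμs]
      refine (l1_smul_one_sub_inv_mulVec_le hM hcol (hc μ hμ) hxs0).trans ?_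
      exact div_le_div_of_nonneg_left (l1_nonneg xs) (by linarith) (by linarith [hμ.2]))
    (by simp [hs0, hμs0]) hsrec
  exact ⟨fun k => ⟨(hmem k).1, hmono k.le_succ, (hmem (k + 1)).2⟩, hlim⟩

/-- Theorem 16: Newton's iteration `μ_{k+1} = μ_k - g(μ_k)/g'(μ_k)`, `μ₀ = 0`,
applied to `g(μ) = ‖(A-μI)⁻¹b‖₁ - μ` (with `g'(μ) = ‖(A-μI)⁻²b‖₁ - 1`) is
well-defined, monotonically increasing with `0 ≤ μ_k ≤ μ_{k+1} ≤ μ*`, and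
converges to `μ* = ‖x*‖₁`, where `x*` is the unique solution of
`Ax - ‖x‖₁x = b` with `‖x*‖₁ < 1 - σ`. -/
theorem stmt_12 {n : ℕ} (M : Matrix (Fin n) (Fin n) ℝ) (hM : ∀ i j, 0 ≤ M i j)
    (σ : ℝ) (hσ : σ = op1 M) (hσ1 : σ < 1)
    (A : Matrix (Fin n) (Fin n) ℝ) (hA : A = (2 - σ) • (1 : Matrix (Fin n) (Fin n) ℝ) - M)
    (b : Fin n → ℝ) (hb : ∀ i, 0 ≤ b i) (hb1 : l1 b < (1 - σ) ^ 2)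
    (xs : Fin n → ℝ) (hxs : A.mulVec xs - l1 xs • xs = b) (hxs1 : l1 xs < 1 - σ)
    (hxsuniq : ∀ y : Fin n → ℝ, A.mulVec y - l1 y • y = b → l1 y < 1 - σ → y = xs)
    (μs : ℝ) (hμs : μs = l1 xs)
    (s : ℕ → ℝ) (hs0 : s 0 = 0)
    (hsrec : ∀ k, s (k + 1) = s k -
      (l1 ((A - s k • 1)⁻¹.mulVec b) - s k) /
        (l1 (((A - s k • 1)⁻¹ * (A - s k • 1)⁻¹).mulVec b) - 1)) :
    (∀ k, 0 ≤ s k ∧ s k ≤ s (k + 1) ∧ s (k + 1) ≤ μs) ∧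
      Tendsto s atTop (𝓝 μs) :=
  stmt_12_general M hM σ hσ hσ1 A hA b hb xs hxs hxs1 μs hμs s hs0 hsrec
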